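/- arXiv:2009.00373 — 2 statements merged into one kernel-verified Lean document; each statement's English description precedes it below -/
import Mathlib

section
/- With L, d, D, R, F as above, let S ⊆ L with |S| ≥ 2, let S_R = L \ S be nonempty, let l_ref ∈ S_R attain the maximum relevance over S_R, and let D_max = max_{y ∈ S_R} min_{l ∈ S} d(y, l). Define R↓ = R(l_ref) + ((1−ω)/ω) · ( D(S ∪ {l_ref}) − D(S) − D_max ). Then for any l' ∈ S_R with F(S ∪ {l'}) > F(S ∪ {l_ref}) it holds that R(l') > R↓. -/
open Finset

noncomputable def dmin {L : Type*} [DecidableEq L] (d : L → L → ℝ) (x : L) (T : Finset L) : ℝ :=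
  sInf ((T.image (d x) : Finset ℝ) : Set ℝ)

noncomputable def aggDiv {L : Type*} [DecidableEq L] (d : L → L → ℝ) (S : Finset L) : ℝ :=
  ∑ l ∈ S, dmin d l (S.erase l)

/-!
Adding `l'` to `S` raises the diversity by at most `Dmax`: the new point contributes its
distance `dmin d l' S ≤ Dmax` to `S`, and every old point's nearest-neighbour distance can only
shrink when a neighbour is added. Hence `F(S ∪ {l'}) ≤ ω (ΣR(S) + R l') + (1 - ω)(D(S) + Dmax)`,
and comparing with `F(S ∪ {lref})` and dividing by `ω` gives the bound.
-/

section Diversity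

variable {L : Type*} [DecidableEq L] (d : L → L → ℝ)

lemma dmin_le_dmin_of_subset {x : L} {T T' : Finset L} (hT : T.Nonempty) (hTT' : T ⊆ T') :
    dmin d x T' ≤ dmin d x T := by
  unfold dmin
  apply csInf_le_csInf (T'.image (d x)).finite_toSet.bddBelow
  · exact_mod_cast hT.image _
  · exact_mod_cast image_subset_image hTT'

lemma aggDiv_insert_le {S : Finset L} (hS : S.Nontrivial) {a : L} (ha : a ∉ S) :
    aggDiv d (insert a S) ≤ dmin d a S + aggDiv d S := by
  unfold aggDiv
  rw [sum_insert ha, erase_insert ha]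
  gcongr with l hl
  rw [erase_insert_of_ne (ne_of_mem_of_not_mem hl ha).symm]
  exact dmin_le_dmin_of_subset d hS.erase_nonempty (subset_insert _ _)

end Diversity

lemma lt_of_weighted_gain {ω r r' g g' M : ℝ} (hω0 : 0 < ω) (hω1 : ω < 1) (hg' : g' ≤ M)
    (hgain : ω * r' + (1 - ω) * g' > ω * r + (1 - ω) * g) :
    r' > r + (1 - ω) / ω * (g - M) := by
  have hscaled : ω * r' > ω * r + (1 - ω) * (g - M) := by nlinarith
  rw [gt_iff_lt, ← mul_lt_mul_iff_right₀ hω0]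
  calc ω * (r + (1 - ω) / ω * (g - M)) = ω * r + (1 - ω) * (g - M) := by field_simp
    _ < ω * r' := hscaled

theorem stmt10_general {L : Type*} [Fintype L] [DecidableEq L] (d : L → L → ℝ)
    (R : L → ℝ) (ω : ℝ) (hω0 : 0 < ω) (hω1 : ω < 1)
    (S : Finset L) (hS : 2 ≤ S.card)
    (lref : L) (hlref : lref ∈ Sᶜ)
    (Dmax : ℝ) (hDmax : Dmax = sSup ((Sᶜ.image (fun y => dmin d y S) : Finset ℝ) : Set ℝ))
    (l' : L) (hl' : l' ∈ Sᶜ)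
    (hbetter : ω * ∑ l ∈ insert l' S, R l + (1 - ω) * aggDiv d (insert l' S) >
      ω * ∑ l ∈ insert lref S, R l + (1 - ω) * aggDiv d (insert lref S)) :
    R l' > R lref + ((1 - ω) / ω) * (aggDiv d (insert lref S) - aggDiv d S - Dmax) := by
  have hl'S : l' ∉ S := mem_compl.mp hl'
  have hdmin_le : dmin d l' S ≤ Dmax :=
    hDmax ▸ le_csSup (Finset.bddAbove _) (by exact_mod_cast mem_image_of_mem _ hl')
  have hgain_le : aggDiv d (insert l' S) - aggDiv d S ≤ Dmax := by
    have := aggDiv_insert_le d (one_lt_card_iff_nontrivial.mp hS) hl'S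
    linarith
  rw [sum_insert hl'S, sum_insert (mem_compl.mp hlref)] at hbetter
  refine lt_of_weighted_gain hω0 hω1 hgain_le ?_
  linarith

theorem stmt10 {L : Type*} [Fintype L] [DecidableEq L] (d : L → L → ℝ)
    (hsym : ∀ a b, d a b = d b a) (hnn : ∀ a b, 0 ≤ d a b)
    (R : L → ℝ) (hR : ∀ l, 0 ≤ R l) (ω : ℝ) (hω0 : 0 < ω) (hω1 : ω < 1)
    (S : Finset L) (hS : 2 ≤ S.card) (hSR : Sᶜ.Nonempty)
    (lref : L) (hlref : lref ∈ Sᶜ) (hmaxR : ∀ y ∈ Sᶜ, R y ≤ R lref)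
    (Dmax : ℝ) (hDmax : Dmax = sSup ((Sᶜ.image (fun y => dmin d y S) : Finset ℝ) : Set ℝ))
    (l' : L) (hl' : l' ∈ Sᶜ)
    (hbetter : ω * ∑ l ∈ insert l' S, R l + (1 - ω) * aggDiv d (insert l' S) >
      ω * ∑ l ∈ insert lref S, R l + (1 - ω) * aggDiv d (insert lref S)) :
    R l' > R lref + ((1 - ω) / ω) * (aggDiv d (insert lref S) - aggDiv d S - Dmax) :=
  stmt10_general d R ω hω0 hω1 S hS lref hlref Dmax hDmax l' hl' hbetter
end

section
/- With L, d, D as above, suppose S ⊆ L with |S| ≥ 2, x ∉ S, and d(x, l) > min_{l' ∈ S \ {l}} d(l, l') for every l ∈ S. Then D̂ = Σ_{l ∈ S} min( min_{l' ∈ S \ {l}} d(l, l'), d(l, x) ) equals D(S), and consequently D(S ∪ {x}) = D(S) + min_{l ∈ S} d(x, l). -/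
open Finset

/-
Adding `x` to `S` contributes its own term `dmin d x S` and can only lower each old term
`dmin d l (S.erase l)` to `d l x`; the hypothesis says this never happens, so the old terms stay.
-/

section

variable {L : Type*} [DecidableEq L] (d : L → L → ℝ)

lemma dmin_insert {l : L} (a : L) {T : Finset L} (hT : T.Nonempty) :
    dmin d l (insert a T) = min (d l a) (dmin d l T) := by
  unfold dmin
  rw [image_insert, coe_insert,
    csInf_insert (T.image (d l)).finite_toSet.bddBelow (by simpa using hT.image (d l))]

lemma aggDiv_insert {S : Finset L} (hS : S.Nontrivial) {x : L} (hx : x ∉ S) :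
    aggDiv d (insert x S) = ∑ l ∈ S, min (dmin d l (S.erase l)) (d l x) + dmin d x S := by
  unfold aggDiv
  rw [sum_insert hx, erase_insert hx, add_comm]
  congr 1
  refine sum_congr rfl fun l hl => ?_
  have hxl : x ≠ l := fun h => hx (h ▸ hl)
  rw [erase_insert_of_ne hxl, dmin_insert d x hS.erase_nonempty, min_comm]

end

theorem stmt16_general {L : Type*} [DecidableEq L] (d : L → L → ℝ)
    (hsym : ∀ a b, d a b = d b a)
    (S : Finset L) (hS : 2 ≤ S.card) (x : L) (hx : x ∉ S)
    (hgt : ∀ l ∈ S, dmin d l (S.erase l) < d x l) :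
    (∑ l ∈ S, min (dmin d l (S.erase l)) (d l x)) = aggDiv d S ∧
      aggDiv d (insert x S) = aggDiv d S + dmin d x S := by
  have hhat : ∑ l ∈ S, min (dmin d l (S.erase l)) (d l x) = aggDiv d S :=
    sum_congr rfl fun l hl => min_eq_left (hsym l x ▸ (hgt l hl).le)
  refine ⟨hhat, ?_⟩
  rw [aggDiv_insert d (one_lt_card_iff_nontrivial.mp hS) hx, hhat]

theorem stmt16 {L : Type*} [Fintype L] [DecidableEq L] (d : L → L → ℝ)
    (hsym : ∀ a b, d a b = d b a) (hnn : ∀ a b, 0 ≤ d a b)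
    (S : Finset L) (hS : 2 ≤ S.card) (x : L) (hx : x ∉ S)
    (hgt : ∀ l ∈ S, dmin d l (S.erase l) < d x l) :
    (∑ l ∈ S, min (dmin d l (S.erase l)) (d l x)) = aggDiv d S ∧
      aggDiv d (insert x S) = aggDiv d S + dmin d x S :=
  stmt16_general d hsym S hS x hx hgt
end
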